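/- arXiv:2510.15257 — 3 statements merged into one kernel-verified Lean document; each statement's English description precedes it below -/
import Mathlib

section
/- If f : 2^[n] → ℝ is submodular with f(∅) = 0, then its Lovász extension f^L : ℝ^n → ℝ is convex. -/
/-!
For a permutation `τ`, the greedy vector `w_τ` records the marginal gains of `f` along the chain
`∅ ⊆ {τ 0} ⊆ {τ 0, τ 1} ⊆ ⋯`. By submodularity `∑ i ∈ A, w_τ i ≤ f A - f ∅` for every `A`, with
equality for `A = univ`. If `σ` sorts `x` decreasingly, Abel summation along `σ` turns these
inequalities into `w ⬝ᵥ x ≤ w_σ ⬝ᵥ x = f^L(x)` for every such `w`. Hence `f^L` is the pointwise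
maximum of the linear functionals `x ↦ w_τ ⬝ᵥ x`, and so it is convex.
-/

open Finset

/-- The Lovász extension of a set function `f : 2^[n] → ℝ` (with `f ∅ = 0`):
order the coordinates of `x` decreasingly via a permutation `σ` (obtained by sorting
`-x` increasingly), and set
`f^L(x) = ∑ₖ x(σ k) * (f {σ 0, …, σ k} − f {σ 0, …, σ (k-1)})`. -/
noncomputable def lovasz {n : ℕ} (f : Finset (Fin n) → ℝ) (x : Fin n → ℝ) : ℝ :=
  ∑ k : Fin n,
    x (Tuple.sort (fun i => -x i) k) *
      (f ((Finset.univ.filter (fun j : Fin n => j ≤ k)).image (Tuple.sort (fun i => -x i)))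
        - f ((Finset.univ.filter (fun j : Fin n => j < k)).image (Tuple.sort (fun i => -x i))))

open Equiv

def IsSubmodular {α : Type*} [DecidableEq α] (f : Finset α → ℝ) : Prop :=
  ∀ S T : Finset α, f (S ∩ T) + f (S ∪ T) ≤ f S + f T

theorem IsSubmodular.insert_sub_le_insert_sub {α : Type*} [DecidableEq α] {f : Finset α → ℝ}
    (hf : IsSubmodular f) {A B : Finset α} (hAB : A ⊆ B) {a : α} (ha : a ∉ B) :
    f (insert a B) - f B ≤ f (insert a A) - f A := by
  have hinter : insert a A ∩ B = A := by
    rw [insert_inter_of_notMem ha, inter_eq_left.2 hAB]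
  have hunion : insert a A ∪ B = insert a B := by
    rw [insert_union, union_eq_right.2 hAB]
  have := hf (insert a A) B
  rw [hinter, hunion] at this
  linarith

theorem convexOn_of_forall_le_of_exists_eq {𝕜 E β ι : Type*} [Semiring 𝕜] [PartialOrder 𝕜]
    [AddCommMonoid E] [SMul 𝕜 E] [AddCommMonoid β] [PartialOrder β] [IsOrderedAddMonoid β]
    [Module 𝕜 β] [PosSMulMono 𝕜 β] {s : Set E} {g : ι → E → β} {f : E → β} (hs : Convex 𝕜 s)
    (hg : ∀ i, ConvexOn 𝕜 s (g i)) (hle : ∀ i, ∀ x ∈ s, g i x ≤ f x)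
    (hex : ∀ x ∈ s, ∃ i, f x = g i x) : ConvexOn 𝕜 s f := by
  refine ⟨hs, fun x hx y hy a b ha hb hab => ?_⟩
  obtain ⟨i, hi⟩ := hex _ (hs hx hy ha hb hab)
  calc f (a • x + b • y) = g i (a • x + b • y) := hi
    _ ≤ a • g i x + b • g i y := (hg i).2 hx hy ha hb hab
    _ ≤ a • f x + b • f y := by gcongr <;> exact hle i _ ‹_›

theorem sum_range_mul_nonneg_of_antitone {u g : ℕ → ℝ} {N : ℕ}
    (hu : ∀ i, i + 1 < N → u (i + 1) ≤ u i) (hg : ∀ m ≤ N, 0 ≤ ∑ i ∈ range m, g i)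
    (hN : ∑ i ∈ range N, g i = 0) : 0 ≤ ∑ i ∈ range N, u i * g i := by
  have := sum_range_by_parts u g N
  simp only [smul_eq_mul] at this
  rw [this, hN, mul_zero, zero_sub, neg_nonneg]
  refine sum_nonpos fun i hi => mul_nonpos_of_nonpos_of_nonneg ?_ (hg _ ?_)
  · have := hu i (by rw [mem_range] at hi; omega)
    linarith
  · rw [mem_range] at hi; omega

namespace Equiv.Perm

variable {n : ℕ}

def prefixSet (τ : Perm (Fin n)) (m : ℕ) : Finset (Fin n) := {i | (τ.symm i : ℕ) < m}

@[simp]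
theorem mem_prefixSet {τ : Perm (Fin n)} {m : ℕ} {i : Fin n} :
    i ∈ τ.prefixSet m ↔ (τ.symm i : ℕ) < m := by
  simp [prefixSet]

@[simp]
theorem prefixSet_zero (τ : Perm (Fin n)) : τ.prefixSet 0 = ∅ := by
  ext; simp

theorem prefixSet_of_le (τ : Perm (Fin n)) {m : ℕ} (h : n ≤ m) : τ.prefixSet m = univ := by
  ext i; simpa using (τ.symm i).isLt.trans_le h

theorem prefixSet_succ (τ : Perm (Fin n)) (k : Fin n) :
    τ.prefixSet (k + 1) = insert (τ k) (τ.prefixSet k) := by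
  ext i
  simp only [mem_prefixSet, mem_insert, Nat.lt_succ_iff_lt_or_eq, Fin.val_inj,
    symm_apply_eq, or_comm]

theorem apply_notMem_prefixSet (τ : Perm (Fin n)) (k : Fin n) : τ k ∉ τ.prefixSet k := by
  simp

theorem image_filter_le (τ : Perm (Fin n)) (k : Fin n) :
    ({j | j ≤ k} : Finset (Fin n)).image τ = τ.prefixSet (k + 1) := by
  ext i
  simp only [mem_image, mem_filter, mem_univ, true_and, mem_prefixSet, Nat.lt_succ_iff]
  exact ⟨fun ⟨j, hj, hji⟩ => by simpa [← hji] using hj, fun h => ⟨τ.symm i, h, by simp⟩⟩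

theorem image_filter_lt (τ : Perm (Fin n)) (k : Fin n) :
    ({j | j < k} : Finset (Fin n)).image τ = τ.prefixSet k := by
  ext i
  simp only [mem_image, mem_filter, mem_univ, true_and, mem_prefixSet]
  exact ⟨fun ⟨j, hj, hji⟩ => by simpa [← hji] using hj, fun h => ⟨τ.symm i, h, by simp⟩⟩

theorem dotProduct_nonneg_of_antitone {σ : Perm (Fin n)} {x d : Fin n → ℝ}
    (hx : Antitone (x ∘ σ)) (hd : ∀ m, 0 ≤ ∑ i ∈ σ.prefixSet m, d i) (hd_univ : ∑ i, d i = 0) :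
    0 ≤ d ⬝ᵥ x := by
  set u : ℕ → ℝ := fun m => if h : m < n then x (σ ⟨m, h⟩) else 0
  set g : ℕ → ℝ := fun m => if h : m < n then d (σ ⟨m, h⟩) else 0
  have hprefix : ∀ m ≤ n, ∑ i ∈ σ.prefixSet m, d i = ∑ k ∈ range m, g k := by
    intro m
    induction m with
    | zero => simp
    | succ m ih =>
      intro hm
      obtain ⟨k, rfl⟩ : ∃ k : Fin n, (k : ℕ) = m := ⟨⟨m, hm⟩, rfl⟩
      rw [σ.prefixSet_succ, sum_insert (σ.apply_notMem_prefixSet k), ih k.isLt.le,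
        sum_range_succ, add_comm]
      simp [g]
  have hdot : d ⬝ᵥ x = ∑ k ∈ range n, u k * g k := by
    rw [dotProduct, ← Equiv.sum_comp σ, ← Fin.sum_univ_eq_sum_range]
    simp [u, g, mul_comm]
  rw [hdot]
  refine sum_range_mul_nonneg_of_antitone (fun i hi => ?_) (fun m hm => ?_) ?_
  · simp only [u, dif_pos hi, dif_pos (by omega : i < n)]
    exact hx (Fin.mk_le_mk.2 (by omega))
  · rw [← hprefix m hm]
    exact hd m
  · rw [← hprefix n le_rfl, σ.prefixSet_of_le le_rfl, hd_univ]

end Equiv.Perm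

section Greedy

variable {n : ℕ} (f : Finset (Fin n) → ℝ) (τ : Perm (Fin n))

def greedyVector (i : Fin n) : ℝ :=
  f (τ.prefixSet (τ.symm i + 1)) - f (τ.prefixSet (τ.symm i))

@[simp]
theorem greedyVector_apply_perm (k : Fin n) :
    greedyVector f τ (τ k) = f (τ.prefixSet (k + 1)) - f (τ.prefixSet k) := by
  simp [greedyVector]

theorem sum_prefixSet_greedyVector (m : ℕ) :
    ∑ i ∈ τ.prefixSet m, greedyVector f τ i = f (τ.prefixSet m) - f ∅ := by
  induction m with
  | zero => simp
  | succ m ih =>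
    by_cases hm : m < n
    · obtain ⟨k, rfl⟩ : ∃ k : Fin n, (k : ℕ) = m := ⟨⟨m, hm⟩, rfl⟩
      rw [τ.prefixSet_succ, sum_insert (τ.apply_notMem_prefixSet k), ih, greedyVector_apply_perm,
        τ.prefixSet_succ]
      ring
    · rw [τ.prefixSet_of_le (by omega : n ≤ m + 1), ← τ.prefixSet_of_le (not_lt.1 hm), ih]

theorem sum_greedyVector : ∑ i, greedyVector f τ i = f univ - f ∅ := by
  simpa [τ.prefixSet_of_le le_rfl] using sum_prefixSet_greedyVector f τ n

end Greedy

theorem IsSubmodular.sum_greedyVector_le {n : ℕ} {f : Finset (Fin n) → ℝ} (hf : IsSubmodular f)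
    (τ : Perm (Fin n)) (A : Finset (Fin n)) :
    ∑ i ∈ A, greedyVector f τ i ≤ f A - f ∅ := by
  induction A using Finset.induction_on_max_value τ.symm with
  | empty => simp
  | insert a s ha hmax ih =>
    have hs : s ⊆ τ.prefixSet (τ.symm a) := fun i hi =>
      τ.mem_prefixSet.2 <| (hmax i hi).lt_of_ne fun h => ha (τ.symm.injective h ▸ hi)
    have hgain : greedyVector f τ a ≤ f (insert a s) - f s := by
      have ha' : a ∉ τ.prefixSet (τ.symm a) := by simp
      calc greedyVector f τ a
          = f (insert a (τ.prefixSet (τ.symm a))) - f (τ.prefixSet (τ.symm a)) := by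
            rw [greedyVector, τ.prefixSet_succ, apply_symm_apply]
        _ ≤ f (insert a s) - f s := hf.insert_sub_le_insert_sub hs ha'
    rw [sum_insert ha]
    linarith

theorem lovasz_eq_greedyVector_dotProduct {n : ℕ} (f : Finset (Fin n) → ℝ) (x : Fin n → ℝ) :
    lovasz f x = greedyVector f (Tuple.sort fun i => -x i) ⬝ᵥ x := by
  rw [lovasz, dotProduct, ← Equiv.sum_comp (Tuple.sort fun i => -x i) (fun i => _ * x i)]
  simp only [Perm.image_filter_le, Perm.image_filter_lt, greedyVector_apply_perm, mul_comm]

theorem dotProduct_le_lovasz {n : ℕ} {f : Finset (Fin n) → ℝ} {w : Fin n → ℝ}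
    (hw : ∀ A, ∑ i ∈ A, w i ≤ f A - f ∅) (hw_univ : ∑ i, w i = f univ - f ∅) (x : Fin n → ℝ) :
    w ⬝ᵥ x ≤ lovasz f x := by
  rw [lovasz_eq_greedyVector_dotProduct, ← sub_nonneg, ← sub_dotProduct]
  set σ := Tuple.sort fun i => -x i
  refine Perm.dotProduct_nonneg_of_antitone (σ := σ) ?_ (fun m => ?_) ?_
  · exact fun a b hab => neg_le_neg_iff.1 (Tuple.monotone_sort (fun i => -x i) hab)
  · simp only [Pi.sub_apply, sum_sub_distrib, sum_prefixSet_greedyVector]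
    linarith [hw (σ.prefixSet m)]
  · simp only [Pi.sub_apply, sum_sub_distrib, sum_greedyVector, hw_univ, sub_self]

theorem stmt3_general {n : ℕ} (f : Finset (Fin n) → ℝ)
    (hsub : ∀ S T : Finset (Fin n), f (S ∩ T) + f (S ∪ T) ≤ f S + f T) :
    ConvexOn ℝ Set.univ (lovasz f) :=
  convexOn_of_forall_le_of_exists_eq (g := fun τ => dotProductBilin ℝ ℝ (greedyVector f τ))
    convex_univ (fun _ => LinearMap.convexOn _ convex_univ)
    (fun τ x _ => dotProduct_le_lovasz (IsSubmodular.sum_greedyVector_le hsub τ)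
      (sum_greedyVector f τ) x)
    (fun x _ => ⟨_, lovasz_eq_greedyVector_dotProduct f x⟩)

/-- the Lovász extension of a submodular function is convex on ℝⁿ. -/
theorem stmt3 {n : ℕ} (f : Finset (Fin n) → ℝ) (hf : f ∅ = 0)
    (hsub : ∀ S T : Finset (Fin n), f (S ∩ T) + f (S ∪ T) ≤ f S + f T) :
    ConvexOn ℝ Set.univ (lovasz f) :=
  stmt3_general f hsub
end

section
/- If f : 2^[n] → ℝ is submodular with f(∅) = 0, then the minimum of f over all subsets of [n] equals the minimum of its Lovász extension f^L over the hypercube [0,1]^n: min_{S ⊆ [n]} f(S) = min_{x ∈ [0,1]^n} f^L(x). -/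
/-!
Sort the coordinates of `x ∈ [0,1]ⁿ` decreasingly as `a₀ ≥ a₁ ≥ ⋯ ≥ aₙ₋₁`, put `aₙ = 0`, and let
`Sₖ` be the set of the `k` largest coordinates. Abel summation turns
`f^L(x) = ∑ₖ aₖ (f Sₖ₊₁ - f Sₖ)` into `∑ₖ (aₖ - aₖ₊₁) f Sₖ₊₁`: nonnegative weights of total
`a₀ ≤ 1`, the missing weight `1 - a₀` going to `f ∅ = 0`. Hence `f^L(x) ≥ min f`, and the minimum
is attained at the indicator vector of a minimiser `S`, where `f^L(1_S) = f S`.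
-/

open Finset

theorem Finset.sum_range_mul_sub_eq {R : Type*} [CommRing R] (a b : ℕ → R) (n : ℕ) :
    ∑ k ∈ range n, a k * (b (k + 1) - b k)
      = a n * b n - a 0 * b 0 + ∑ k ∈ range n, (a k - a (k + 1)) * b (k + 1) := by
  induction n with
  | zero => simp
  | succ n ih => rw [sum_range_succ, sum_range_succ, ih]; ring

theorem le_sum_range_mul_sub_of_antitone {a b : ℕ → ℝ} {m : ℝ} {n : ℕ} (ha : Antitone a)
    (han : a n = 0) (ha0 : a 0 ≤ 1) (hb0 : b 0 = 0) (hm : ∀ k, m ≤ b k) :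
    m ≤ ∑ k ∈ range n, a k * (b (k + 1) - b k) := by
  have hm0 : m ≤ 0 := hb0 ▸ hm 0
  have hdiff : ∀ k, 0 ≤ a k - a (k + 1) := fun k => sub_nonneg.2 (ha k.le_succ)
  calc m ≤ a 0 * m := by nlinarith
    _ = ∑ k ∈ range n, (a k - a (k + 1)) * m := by
      rw [← sum_mul, sum_range_sub' a n, han, sub_zero]
    _ ≤ ∑ k ∈ range n, (a k - a (k + 1)) * b (k + 1) :=
      sum_le_sum fun k _ => mul_le_mul_of_nonneg_left (hm _) (hdiff k)
    _ = ∑ k ∈ range n, a k * (b (k + 1) - b k) := by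
      rw [sum_range_mul_sub_eq, han, hb0]; ring

theorem Fin.mem_iff_lt_card_of_isLowerSet {n : ℕ} {U : Finset (Fin n)}
    (hU : IsLowerSet (U : Set (Fin n))) (k : Fin n) : k ∈ U ↔ (k : ℕ) < #U := by
  constructor
  · intro hk
    have := card_le_card fun j (hj : j ∈ Iic k) => hU (mem_Iic.1 hj) hk
    rw [Fin.card_Iic] at this
    omega
  · intro hk
    by_contra hkU
    have := card_le_card fun j (hj : j ∈ U) =>
      mem_Iio.2 (lt_of_not_ge fun hkj => hkU (hU hkj hj))
    rw [Fin.card_Iio] at this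
    omega

namespace Lovasz

variable {n : ℕ}

noncomputable def sortedCoord (x : Fin n → ℝ) (k : ℕ) : ℝ :=
  if h : k < n then x (Tuple.sort (fun i => -x i) ⟨k, h⟩) else 0

noncomputable def sortedPrefix (x : Fin n → ℝ) (c : ℕ) : Finset (Fin n) :=
  (univ.filter fun j : Fin n => (j : ℕ) < c).image (Tuple.sort fun i => -x i)

@[simp]
theorem sortedPrefix_zero (x : Fin n → ℝ) : sortedPrefix x 0 = ∅ := by
  simp [sortedPrefix]

theorem sortedCoord_eq_zero_of_le {x : Fin n → ℝ} {k : ℕ} (hk : n ≤ k) : sortedCoord x k = 0 :=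
  dif_neg hk.not_gt

theorem sortedCoord_antitone {x : Fin n → ℝ} (hx : 0 ≤ x) : Antitone (sortedCoord x) := by
  intro k l hkl
  by_cases hl : l < n
  · have := Tuple.monotone_sort (fun i => -x i)
      (show (⟨k, hkl.trans_lt hl⟩ : Fin n) ≤ ⟨l, hl⟩ from hkl)
    simp only [sortedCoord, dif_pos hl, dif_pos (hkl.trans_lt hl)]
    simpa using this
  · rw [sortedCoord_eq_zero_of_le (not_lt.1 hl)]
    unfold sortedCoord
    split
    · exact hx _
    · exact le_rfl

theorem _root_.lovasz_eq_sum_range (f : Finset (Fin n) → ℝ) (x : Fin n → ℝ) :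
    lovasz f x = ∑ k ∈ range n,
      sortedCoord x k * (f (sortedPrefix x (k + 1)) - f (sortedPrefix x k)) := by
  rw [lovasz, ← Fin.sum_univ_eq_sum_range
    (fun k => sortedCoord x k * (f (sortedPrefix x (k + 1)) - f (sortedPrefix x k)))]
  refine sum_congr rfl fun k _ => ?_
  simp only [sortedCoord, dif_pos k.isLt, sortedPrefix, Fin.lt_def, Nat.lt_succ_iff, ← Fin.le_def]

theorem sort_indicator_mem_iff (S : Finset (Fin n)) (k : Fin n) :
    Tuple.sort (fun i => -if i ∈ S then (1 : ℝ) else 0) k ∈ S ↔ (k : ℕ) < #S := by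
  have hσ := Tuple.monotone_sort fun i => -if i ∈ S then (1 : ℝ) else 0
  set σ := Tuple.sort fun i => -if i ∈ S then (1 : ℝ) else 0
  have hlower : IsLowerSet (S.map σ.symm.toEmbedding : Set (Fin n)) := by
    intro k l hlk hk
    simp only [coe_map, Equiv.coe_toEmbedding, Set.mem_image_equiv, Equiv.symm_symm,
      mem_coe] at hk ⊢
    by_contra hl
    have := hσ hlk
    norm_num [hk, hl] at this
  simpa using Fin.mem_iff_lt_card_of_isLowerSet hlower k

theorem sortedCoord_indicator (S : Finset (Fin n)) (k : ℕ) :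
    sortedCoord (fun i => if i ∈ S then (1 : ℝ) else 0) k = if k < #S then 1 else 0 := by
  unfold sortedCoord
  split
  · next hk => simp only [sort_indicator_mem_iff S ⟨k, hk⟩]
  · next hk => rw [if_neg (by have := card_le_univ S; simp only [Fintype.card_fin] at this; omega)]

theorem sortedPrefix_indicator_card (S : Finset (Fin n)) :
    sortedPrefix (fun i => if i ∈ S then (1 : ℝ) else 0) #S = S := by
  ext j
  simp only [sortedPrefix, mem_image, mem_filter, mem_univ, true_and]
  constructor
  · rintro ⟨k, hk, rfl⟩
    exact (sort_indicator_mem_iff S k).2 hk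
  · intro hj
    refine ⟨(Tuple.sort _).symm j, ?_, Equiv.apply_symm_apply _ _⟩
    rw [← sort_indicator_mem_iff]
    simpa using hj

end Lovasz

open Lovasz

theorem lovasz_indicator {n : ℕ} {f : Finset (Fin n) → ℝ} (hf : f ∅ = 0) (S : Finset (Fin n)) :
    lovasz f (fun i => if i ∈ S then 1 else 0) = f S := by
  have hrange : (range n).filter (· < #S) = range #S := by
    have := card_le_univ S
    simp only [Fintype.card_fin] at this
    ext k; simp only [mem_filter, mem_range]; omega
  rw [lovasz_eq_sum_range]
  simp only [sortedCoord_indicator, ite_mul, one_mul, zero_mul]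
  rw [← sum_filter, hrange, sum_range_sub (fun k => f (sortedPrefix _ k)),
    sortedPrefix_indicator_card, sortedPrefix_zero, hf, sub_zero]

theorem le_lovasz_of_mem_Icc {n : ℕ} {f : Finset (Fin n) → ℝ} (hf : f ∅ = 0) {m : ℝ}
    (hm : ∀ S, m ≤ f S) {x : Fin n → ℝ} (hx : x ∈ Set.Icc 0 1) : m ≤ lovasz f x := by
  have hx₀ : sortedCoord x 0 ≤ 1 := by
    unfold sortedCoord
    split
    · exact hx.2 _
    · exact zero_le_one
  rw [lovasz_eq_sum_range]
  exact le_sum_range_mul_sub_of_antitone (sortedCoord_antitone hx.1)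
    (sortedCoord_eq_zero_of_le le_rfl) hx₀ (by simp [hf]) fun k => hm _

theorem stmt4_general {n : ℕ} (f : Finset (Fin n) → ℝ) (hf : f ∅ = 0) :
    sInf (Set.range f) = sInf (lovasz f '' Set.Icc (0 : Fin n → ℝ) 1) := by
  obtain ⟨S, hS⟩ := Finite.exists_min f
  have hsets : IsLeast (Set.range f) (f S) := ⟨⟨S, rfl⟩, by rintro _ ⟨T, rfl⟩; exact hS T⟩
  have hindicator : (fun i => if i ∈ S then 1 else 0) ∈ Set.Icc (0 : Fin n → ℝ) 1 := by
    constructor <;> intro i <;> dsimp only [Pi.zero_apply, Pi.one_apply] <;> split <;> norm_num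
  have hcube : IsLeast (lovasz f '' Set.Icc 0 1) (f S) := by
    refine ⟨⟨_, hindicator, lovasz_indicator hf S⟩, ?_⟩
    rintro _ ⟨x, hx, rfl⟩
    exact le_lovasz_of_mem_Icc hf hS hx
  rw [hsets.csInf_eq, hcube.csInf_eq]

/-- for submodular f with f ∅ = 0,
min over subsets equals min of the Lovász extension over the hypercube [0,1]ⁿ. -/
theorem stmt4 {n : ℕ} (f : Finset (Fin n) → ℝ) (hf : f ∅ = 0)
    (hsub : ∀ S T : Finset (Fin n), f (S ∩ T) + f (S ∪ T) ≤ f S + f T) :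
    sInf (Set.range f) = sInf (lovasz f '' Set.Icc (0 : Fin n → ℝ) 1) :=
  stmt4_general f hf
end

section
/- If F : ℝ^n → ℝ is Lipschitz with constant L₀, then its Gaussian smoothing F_μ satisfies |F_μ(x) − F(x)| ≤ μ L₀ √n for all x ∈ ℝ^n. -/
open MeasureTheory ProbabilityTheory

/-- The standard Gaussian measure N(0, Iₙ) on ℝⁿ. -/
noncomputable def stdGaussian (n : ℕ) : Measure (Fin n → ℝ) :=
  Measure.pi fun _ => gaussianReal 0 1

/-- The Gaussian smoothing F_μ(x) = E_{u ∼ N(0,I)}[F(x + μ u)]. -/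
noncomputable def gaussSmooth {n : ℕ} (F : (Fin n → ℝ) → ℝ) (μ : ℝ) (x : Fin n → ℝ) : ℝ :=
  ∫ u, F (x + μ • u) ∂(stdGaussian n)

/-- The Euclidean norm on ℝⁿ. -/
noncomputable def euclNorm {n : ℕ} (x : Fin n → ℝ) : ℝ :=
  Real.sqrt (∑ i, (x i)^2)

/-!
The difference `F (x + μ u) - F x` is bounded by `L₀ μ ‖u‖`, so `|F_μ x - F x| ≤ L₀ μ E‖u‖`.
By Jensen, `(E‖u‖)² ≤ E‖u‖² = ∑ᵢ E uᵢ² = n`, since each coordinate of a standard Gaussian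
vector is a standard Gaussian with second moment `1`.
-/

open Filter Topology

section EuclNorm

variable {n : ℕ}

lemma euclNorm_eq_norm_toLp (x : Fin n → ℝ) : euclNorm x = ‖WithLp.toLp 2 x‖ := by
  simp [euclNorm, EuclideanSpace.norm_eq]

lemma euclNorm_sq (x : Fin n → ℝ) : euclNorm x ^ 2 = ∑ i, (x i) ^ 2 :=
  Real.sq_sqrt (Finset.sum_nonneg fun _ _ => sq_nonneg _)

lemma euclNorm_smul (c : ℝ) (x : Fin n → ℝ) : euclNorm (c • x) = |c| * euclNorm x := by
  simp only [euclNorm_eq_norm_toLp, WithLp.toLp_smul, norm_smul, Real.norm_eq_abs]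

lemma continuous_euclNorm : Continuous (euclNorm (n := n)) := by
  simp only [funext euclNorm_eq_norm_toLp]
  fun_prop

lemma continuous_of_abs_sub_le_mul_euclNorm {F : (Fin n → ℝ) → ℝ} {L : ℝ}
    (hF : ∀ x y, |F x - F y| ≤ L * euclNorm (x - y)) : Continuous F := by
  refine continuous_iff_continuousAt.2 fun y => tendsto_iff_dist_tendsto_zero.2 ?_
  have hbound : Tendsto (fun z => L * euclNorm (z - y)) (𝓝 y) (𝓝 (L * euclNorm (y - y))) :=
    ((continuous_euclNorm.comp (continuous_sub_right y)).const_mul L).tendsto y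
  refine squeeze_zero (fun _ => dist_nonneg) (fun z => hF z y) ?_
  simpa [euclNorm] using hbound

end EuclNorm

lemma sq_integral_le_integral_sq {Ω : Type*} [MeasurableSpace Ω] {ν : Measure Ω}
    [IsProbabilityMeasure ν] {f : Ω → ℝ} (hf : MemLp f 2 ν) :
    (∫ ω, f ω ∂ν) ^ 2 ≤ ∫ ω, f ω ^ 2 ∂ν := by
  have h := variance_nonneg f ν
  rw [variance_eq_sub hf] at h
  simpa using h

lemma integral_sq_gaussianReal_zero_one : ∫ x, x ^ 2 ∂gaussianReal 0 1 = 1 := by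
  have h := variance_eq_sub (memLp_id_gaussianReal (μ := 0) (v := 1) 2)
  simp only [variance_id_gaussianReal] at h
  simpa using h.symm

section StdGaussian

variable (n : ℕ)

instance : IsProbabilityMeasure (stdGaussian n) := by
  unfold _root_.stdGaussian; infer_instance

lemma integrable_sq_eval_stdGaussian (i : Fin n) :
    Integrable (fun u => u i ^ 2) (_root_.stdGaussian n) :=
  integrable_comp_eval (μ := fun _ => gaussianReal 0 1) (f := fun t : ℝ => t ^ 2)
    (memLp_id_gaussianReal (μ := 0) (v := 1) 2).integrable_sq

lemma integral_euclNorm_sq_stdGaussian : ∫ u, euclNorm u ^ 2 ∂_root_.stdGaussian n = n := by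
  have hcoord (i : Fin n) : ∫ u, u i ^ 2 ∂_root_.stdGaussian n = 1 := by
    rw [_root_.stdGaussian, integral_comp_eval (μ := fun _ => gaussianReal 0 1)
      (f := fun t : ℝ => t ^ 2) (by fun_prop), integral_sq_gaussianReal_zero_one]
  simp_rw [euclNorm_sq]
  rw [integral_finsetSum _ fun i _ => integrable_sq_eval_stdGaussian n i]
  simp [hcoord]

lemma memLp_euclNorm_stdGaussian : MemLp euclNorm 2 (_root_.stdGaussian n) := by
  refine (memLp_two_iff_integrable_sq continuous_euclNorm.aestronglyMeasurable).2 ?_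
  simp_rw [euclNorm_sq]
  exact integrable_finsetSum _ fun i _ => integrable_sq_eval_stdGaussian n i

lemma integral_euclNorm_stdGaussian_le :
    ∫ u, euclNorm u ∂_root_.stdGaussian n ≤ Real.sqrt n := by
  rw [← integral_euclNorm_sq_stdGaussian]
  exact Real.le_sqrt_of_sq_le (sq_integral_le_integral_sq (memLp_euclNorm_stdGaussian n))

end StdGaussian

theorem abs_integral_comp_add_smul_sub_le {n : ℕ} {ν : Measure (Fin n → ℝ)}
    [IsProbabilityMeasure ν] {F : (Fin n → ℝ) → ℝ} {L : ℝ}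
    (hF : ∀ x y, |F x - F y| ≤ L * euclNorm (x - y)) (hν : Integrable euclNorm ν)
    (μ : ℝ) (x : Fin n → ℝ) :
    |∫ u, F (x + μ • u) ∂ν - F x| ≤ |μ| * L * ∫ u, euclNorm u ∂ν := by
  have hpoint (u : Fin n → ℝ) : |F (x + μ • u) - F x| ≤ |μ| * L * euclNorm u := by
    have h := hF (x + μ • u) x
    rwa [add_sub_cancel_left, euclNorm_smul, mul_left_comm, ← mul_assoc] at h
  have hdiff : Integrable (fun u => F (x + μ • u) - F x) ν :=
    (hν.const_mul (|μ| * L)).mono'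
      ((continuous_of_abs_sub_le_mul_euclNorm hF).comp (by fun_prop)
        |>.sub continuous_const).aestronglyMeasurable
      (Eventually.of_forall hpoint)
  have hcomp : Integrable (fun u => F (x + μ • u)) ν :=
    (hdiff.add (integrable_const (F x))).congr (Eventually.of_forall fun _ => sub_add_cancel _ _)
  calc |∫ u, F (x + μ • u) ∂ν - F x| = |∫ u, (F (x + μ • u) - F x) ∂ν| := by
        rw [integral_sub hcomp (integrable_const _), integral_const, probReal_univ, one_smul]
    _ ≤ ∫ u, |F (x + μ • u) - F x| ∂ν := abs_integral_le_integral_abs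
    _ ≤ ∫ u, |μ| * L * euclNorm u ∂ν := integral_mono hdiff.abs (hν.const_mul _) hpoint
    _ = |μ| * L * ∫ u, euclNorm u ∂ν := integral_const_mul _ _

/-- if F is L₀-Lipschitz (Euclidean norm), its Gaussian smoothing
satisfies |F_μ(x) − F(x)| ≤ μ L₀ √n. -/
theorem stmt10 {n : ℕ} (F : (Fin n → ℝ) → ℝ) (L₀ : ℝ) (hL₀ : 0 < L₀)
    (hLip : ∀ x y : Fin n → ℝ, |F x - F y| ≤ L₀ * euclNorm (x - y))
    (μ : ℝ) (hμ : 0 < μ) (x : Fin n → ℝ) :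
    |gaussSmooth F μ x - F x| ≤ μ * L₀ * Real.sqrt n := by
  have hint := (memLp_euclNorm_stdGaussian n).integrable one_le_two
  calc |gaussSmooth F μ x - F x| ≤ |μ| * L₀ * ∫ u, euclNorm u ∂_root_.stdGaussian n :=
        abs_integral_comp_add_smul_sub_le hLip hint μ x
    _ ≤ μ * L₀ * Real.sqrt n := by
        rw [abs_of_pos hμ]
        exact mul_le_mul_of_nonneg_left (integral_euclNorm_stdGaussian_le n) (by positivity)
end
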